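/- arXiv:2402.04851 — 2 statements merged into one kernel-verified Lean document; each statement's English description precedes it below -/
import Mathlib

section
/- Let u_n denote the number of grand knight's paths of size n. Then u_n is asymptotically equivalent to (√3/6)·(√3+1)^{n+1} as n → ∞, i.e. the ratio of the two quantities tends to 1. -/
open Filter Topology

/-- A knight step: `N = (1,2)`, `Nb = (1,-2)`, `E = (2,1)`, `Eb = (2,-1)`. -/
inductive KStep : Type
  | N | Nb | E | Eb

/-- x-component of a step. -/
def KStep.dx : KStep → ℤ
  | .N => 1
  | .Nb => 1
  | .E => 2
  | .Eb => 2

/-- y-component of a step. -/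
def KStep.dy : KStep → ℤ
  | .N => 2
  | .Nb => -2
  | .E => 1
  | .Eb => -1

/-- The size of a path: the x-coordinate of its endpoint. -/
def pathSize (p : List KStep) : ℤ := (p.map KStep.dx).sum

/-- The altitude of a path: the y-coordinate of its endpoint. -/
def pathAlt (p : List KStep) : ℤ := (p.map KStep.dy).sum

/-- Zigzag condition: y-components of consecutive steps have opposite signs. -/
def IsZigzag (p : List KStep) : Prop :=
  List.Chain' (fun a b => a.dy * b.dy < 0) p

deriving instance DecidableEq for KStep

instance : Finite KStep := Finite.of_injective (fun s => match s with
  | .N => (0 : Fin 4) | .Nb => 1 | .E => 2 | .Eb => 3)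
  (by intro a b h; cases a <;> cases b <;> simp_all)

@[simp] lemma pathSize_nil : pathSize [] = 0 := rfl

@[simp] lemma pathSize_cons (a : KStep) (q : List KStep) :
    pathSize (a :: q) = a.dx + pathSize q := by
  simp [pathSize]

lemma length_le_pathSize (p : List KStep) : (p.length : ℤ) ≤ pathSize p := by
  induction p with
  | nil => simp
  | cons a l ih => cases a <;> simp [KStep.dx] <;> push_cast <;> omega

instance kfin (m : ℤ) : Finite {p : List KStep // pathSize p = m} := by
  rcases le_or_gt 0 m with hm | hm
  · lift m to ℕ using hm
    have : {p : List KStep | pathSize p = (m : ℤ)} ⊆ {l | l.length ≤ m} := by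
      intro p hp
      have := length_le_pathSize p
      simp only [Set.mem_setOf_eq] at hp ⊢
      omega
    exact ((List.finite_length_le KStep m).subset this).to_subtype
  · have : {p : List KStep | pathSize p = m} ⊆ ∅ := by
      intro p hp
      have h1 := length_le_pathSize p
      have h2 : (0 : ℤ) ≤ p.length := by positivity
      simp only [Set.mem_setOf_eq] at hp
      omega
    exact (Set.Finite.subset (Set.finite_empty) this).to_subtype

/-- number of paths of a given (integer) size -/
noncomputable def K (m : ℤ) : ℕ := Nat.card {p : List KStep // pathSize p = m}

lemma K_neg (m : ℤ) (hm : m < 0) : K m = 0 := by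
  rw [K, Nat.card_eq_zero]
  left
  constructor
  rintro ⟨p, hp⟩
  have h1 := length_le_pathSize p
  have h2 : (0 : ℤ) ≤ p.length := by positivity
  omega

lemma K_zero : K 0 = 1 := by
  rw [K, Nat.card_eq_one_iff_unique]
  constructor
  · constructor
    rintro ⟨p, hp⟩ ⟨q, hq⟩
    have key : ∀ (r : List KStep), pathSize r = 0 → r = [] := by
      rintro (_ | ⟨a, l⟩) hr
      · rfl
      · exfalso
        have h1 := length_le_pathSize (a :: l)
        simp at h1 hr
        omega
    have hp' := key p hp
    have hq' := key q hq
    subst hp' hq'; rfl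
  · exact ⟨⟨[], rfl⟩⟩

/-- decomposition by the first step -/
noncomputable def decompEquiv (m : ℤ) (hm : m ≠ 0) :
    {p : List KStep // pathSize p = m} ≃
      (({p : List KStep // pathSize p = m - 1} ⊕ {p : List KStep // pathSize p = m - 1}) ⊕
       ({p : List KStep // pathSize p = m - 2} ⊕ {p : List KStep // pathSize p = m - 2})) where
  toFun := fun x => match x with
    | ⟨[], hp⟩ => absurd (by simpa using hp.symm) hm
    | ⟨.N :: q, hp⟩ => .inl (.inl ⟨q, by simp [KStep.dx] at hp; omega⟩)
    | ⟨.Nb :: q, hp⟩ => .inl (.inr ⟨q, by simp [KStep.dx] at hp; omega⟩)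
    | ⟨.E :: q, hp⟩ => .inr (.inl ⟨q, by simp [KStep.dx] at hp; omega⟩)
    | ⟨.Eb :: q, hp⟩ => .inr (.inr ⟨q, by simp [KStep.dx] at hp; omega⟩)
  invFun := fun x => match x with
    | .inl (.inl ⟨q, hq⟩) => ⟨.N :: q, by simp [KStep.dx]; omega⟩
    | .inl (.inr ⟨q, hq⟩) => ⟨.Nb :: q, by simp [KStep.dx]; omega⟩
    | .inr (.inl ⟨q, hq⟩) => ⟨.E :: q, by simp [KStep.dx]; omega⟩
    | .inr (.inr ⟨q, hq⟩) => ⟨.Eb :: q, by simp [KStep.dx]; omega⟩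
  left_inv := by
    rintro ⟨p, hp⟩
    match p with
    | [] => exact absurd (by simpa using hp.symm) hm
    | .N :: q => rfl
    | .Nb :: q => rfl
    | .E :: q => rfl
    | .Eb :: q => rfl
  right_inv := by
    rintro (⟨q, hq⟩ | ⟨q, hq⟩) <;> rfl

lemma K_rec (m : ℤ) (hm : m ≠ 0) : K m = 2 * K (m - 1) + 2 * K (m - 2) := by
  rw [K, Nat.card_congr (decompEquiv m hm), Nat.card_sum, Nat.card_sum, Nat.card_sum]
  rw [K, K]
  ring

lemma K_one : K 1 = 2 := by
  rw [K_rec 1 one_ne_zero, show (1:ℤ) - 1 = 0 by ring, show (1:ℤ) - 2 = -1 by ring,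
    K_zero, K_neg (-1) (by norm_num)]

lemma K_formula (n : ℕ) : (K (n : ℤ) : ℝ) =
    ((3 + Real.sqrt 3) / 6) * (1 + Real.sqrt 3) ^ n +
    ((3 - Real.sqrt 3) / 6) * (1 - Real.sqrt 3) ^ n := by
  have h3 : Real.sqrt 3 ^ 2 = 3 := Real.sq_sqrt (by norm_num)
  induction n using Nat.twoStepInduction with
  | zero => rw [Nat.cast_zero, K_zero]; push_cast; nlinarith [h3]
  | one => rw [Nat.cast_one, K_one]; push_cast; nlinarith [h3]
  | more n ih1 ih2 =>
    have hrec := K_rec ((n : ℤ) + 2) (by omega)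
    have e1 : ((n : ℕ) + 2 : ℤ) - 1 = ((n + 1 : ℕ) : ℤ) := by push_cast; ring
    have e2 : ((n : ℕ) + 2 : ℤ) - 2 = ((n : ℕ) : ℤ) := by push_cast; ring
    push_cast at hrec ⊢
    rw [show ((n : ℤ) + 2) - 1 = ((n + 1 : ℕ) : ℤ) by push_cast; ring,
        show ((n : ℤ) + 2) - 2 = ((n : ℕ) : ℤ) by push_cast; ring] at hrec
    have : (K ((n : ℤ) + 2) : ℝ) = 2 * (K ((n + 1 : ℕ) : ℤ) : ℝ) + 2 * (K ((n : ℕ) : ℤ) : ℝ) := by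
      exact_mod_cast congrArg (fun x : ℕ => (x : ℝ)) hrec
    rw [this, ih2, ih1]
    have p1 : (1 + Real.sqrt 3) ^ (n + 2) = (1 + Real.sqrt 3) ^ n * (1 + Real.sqrt 3) ^ 2 := by
      ring
    have p2 : (1 - Real.sqrt 3) ^ (n + 2) = (1 - Real.sqrt 3) ^ n * (1 - Real.sqrt 3) ^ 2 := by
      ring
    rw [p1, p2, pow_succ, pow_succ]
    linear_combination (-((3 + Real.sqrt 3) / 6 * (1 + Real.sqrt 3) ^ n
      + (3 - Real.sqrt 3) / 6 * (1 - Real.sqrt 3) ^ n)) * h3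

theorem stmt1 (u : ℕ → ℕ)
    (hu : ∀ n : ℕ, u n = Nat.card {p : List KStep // pathSize p = (n : ℤ)}) :
    Tendsto
      (fun n : ℕ =>
        (u n : ℝ) / (Real.sqrt 3 / 6 * (Real.sqrt 3 + 1) ^ (n + 1)))
      atTop (𝓝 1) := by
  have h3 : Real.sqrt 3 ^ 2 = 3 := Real.sq_sqrt (by norm_num)
  have hs0 : 0 ≤ Real.sqrt 3 := Real.sqrt_nonneg 3
  have hs1 : 1 < Real.sqrt 3 := by nlinarith
  set s : ℝ := Real.sqrt 3 with hs
  have key : ∀ n : ℕ, (u n : ℝ) / (s / 6 * (s + 1) ^ (n + 1)) =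
      1 + ((3 - s) / (3 + s)) * ((1 - s) / (1 + s)) ^ n := by
    intro n
    have hK : u n = K ((n : ℕ) : ℤ) := hu n
    have expand : (u n : ℝ) = (3 + s) / 6 * (1 + s) ^ n + (3 - s) / 6 * (1 - s) ^ n := by
      rw [hK]; exact_mod_cast K_formula n
    have hdenom : s / 6 * (s + 1) ^ (n + 1) = (3 + s) / 6 * (1 + s) ^ n := by
      rw [pow_succ]
      linear_combination ((s + 1) ^ n / 6) * h3
    rw [expand, hdenom, div_pow]
    have h1 : (1 + s) ^ n ≠ 0 := by positivity
    have h2 : (3 + s) ≠ 0 := by linarith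
    field_simp
  have habs : |(1 - s) / (1 + s)| < 1 := by
    rw [abs_div, abs_of_pos (by linarith : (0:ℝ) < 1 + s),
      abs_of_neg (by linarith : 1 - s < 0), div_lt_one (by linarith)]
    linarith
  have hlim : Tendsto (fun n : ℕ => ((1 - s) / (1 + s)) ^ n) atTop (𝓝 0) :=
    tendsto_pow_atTop_nhds_zero_of_abs_lt_one habs
  have hfin : Tendsto (fun n : ℕ => 1 + ((3 - s) / (3 + s)) * ((1 - s) / (1 + s)) ^ n)
      atTop (𝓝 (1 + ((3 - s) / (3 + s)) * 0)) :=
    tendsto_const_nhds.add (hlim.const_mul _)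
  rw [mul_zero, add_zero] at hfin
  exact hfin.congr fun n => (key n).symm
end

section
/- Let n ∈ ℕ and k ∈ ℕ with n ≡ k (mod 2) and k ≤ n. Then |Z⁺_{n,k}| = |C_{(n−k)/2, (n+k)/2}| = |Z⁻_{n,k}|; that is, there are bijections between the set of pairs of compositions C_{(n−k)/2,(n+k)/2} and each of Z⁺_{n,k} and Z⁻_{n,k}. -/
open Filter Topology

/-- `X` is a composition of `n` with all parts in `{1,2}`. -/
def IsComp12 (x : List ℕ) (n : ℕ) : Prop :=
  (∀ a ∈ x, a = 1 ∨ a = 2) ∧ x.sum = n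

/-- The number of pairs `(X,Y)` of compositions of `n` and `m` with parts in `{1,2}`
having the same number of parts. -/
noncomputable def compPairCount (n m : ℕ) : ℕ :=
  Nat.card {xy : List ℕ × List ℕ //
    IsComp12 xy.1 n ∧ IsComp12 xy.2 m ∧ xy.1.length = xy.2.length}

/-- The path is empty or its first step is an up-step (`N` or `E`). -/
def StartsUp (p : List KStep) : Prop := ∀ s ∈ p.head?, 0 < s.dy

/-- The path is empty or its first step is a down-step (`Nb` or `Eb`). -/
def StartsDown (p : List KStep) : Prop := ∀ s ∈ p.head?, s.dy < 0

def KStep.dxn : KStep → ℕ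
  | .N => 1
  | .Nb => 1
  | .E => 2
  | .Eb => 2

def stepUp : ℕ → KStep
  | 1 => .N
  | _ => .E

def stepDn : ℕ → KStep
  | 1 => .Nb
  | _ => .Eb

def enc : List KStep → List ℕ × List ℕ
  | [] => ([], [])
  | [a] => ([a.dxn], [])
  | a :: b :: r => (a.dxn :: (enc r).1, b.dxn :: (enc r).2)

def decU : List ℕ → List ℕ → List KStep
  | x :: xs, y :: ys => stepUp x :: stepDn y :: decU xs ys
  | _, _ => []

def decD : List ℕ → List ℕ → List KStep
  | x :: xs, y :: ys => stepDn y :: stepUp x :: decD xs ys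
  | _, _ => []

theorem pathSize_cons_s7 (s : KStep) (p : List KStep) :
    pathSize (s :: p) = s.dx + pathSize p := by simp [pathSize]

theorem pathAlt_cons (s : KStep) (p : List KStep) :
    pathAlt (s :: p) = s.dy + pathAlt p := by simp [pathAlt]

theorem dxn_mem (s : KStep) : s.dxn = 1 ∨ s.dxn = 2 := by
  cases s <;> simp [KStep.dxn]

theorem dxn_cast (s : KStep) : (s.dxn : ℤ) = s.dx := by
  cases s <;> simp [KStep.dxn, KStep.dx]

theorem dy_up {s : KStep} (h : 0 < s.dy) : s.dy = 3 - (s.dxn : ℤ) := by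
  cases s <;> simp_all [KStep.dxn, KStep.dy]

theorem dy_dn {s : KStep} (h : s.dy < 0) : s.dy = (s.dxn : ℤ) - 3 := by
  cases s <;> simp_all [KStep.dxn, KStep.dy]

theorem stepUp_dxn {s : KStep} (h : 0 < s.dy) : stepUp s.dxn = s := by
  cases s <;> simp_all [KStep.dxn, KStep.dy, stepUp]

theorem stepDn_dxn {s : KStep} (h : s.dy < 0) : stepDn s.dxn = s := by
  cases s <;> simp_all [KStep.dxn, KStep.dy, stepDn]

theorem stepUp_facts {x : ℕ} (h : x = 1 ∨ x = 2) :
    (stepUp x).dx = (x : ℤ) ∧ (stepUp x).dy = 3 - (x : ℤ) ∧ 0 < (stepUp x).dy ∧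
      (stepUp x).dxn = x := by
  rcases h with h | h <;> subst h <;> simp [stepUp, KStep.dx, KStep.dy, KStep.dxn]

theorem stepDn_facts {x : ℕ} (h : x = 1 ∨ x = 2) :
    (stepDn x).dx = (x : ℤ) ∧ (stepDn x).dy = (x : ℤ) - 3 ∧ (stepDn x).dy < 0 ∧
      (stepDn x).dxn = x := by
  rcases h with h | h <;> subst h <;> simp [stepDn, KStep.dx, KStep.dy, KStep.dxn]

theorem parity_len : ∀ p : List KStep, (pathSize p + pathAlt p) % 2 = (p.length : ℤ) % 2 := by
  intro p
  induction p with
  | nil => simp [pathSize, pathAlt]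
  | cons s p ih =>
    rw [pathSize_cons_s7, pathAlt_cons]
    have hs : (s.dx + s.dy) % 2 = 1 := by cases s <;> simp [KStep.dx, KStep.dy]
    simp only [List.length_cons]
    push_cast
    omega

theorem enc_up : ∀ p : List KStep, IsZigzag p → StartsUp p → p.length % 2 = 0 →
    (∀ c ∈ (enc p).1, c = 1 ∨ c = 2) ∧ (∀ c ∈ (enc p).2, c = 1 ∨ c = 2) ∧
    (enc p).1.length = (enc p).2.length ∧
    ((enc p).1.sum : ℤ) + (enc p).2.sum = pathSize p ∧
    ((enc p).2.sum : ℤ) - (enc p).1.sum = pathAlt p ∧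
    decU (enc p).1 (enc p).2 = p := by
  intro p
  induction p using enc.induct with
  | case1 =>
    intro _ _ _
    simp [enc, decU, pathSize, pathAlt]
  | case2 a =>
    intro _ _ h
    simp at h
  | case3 a b r ih =>
    intro hz hu hl
    have ha : 0 < a.dy := hu a rfl
    have hz1 := List.isChain_cons_cons.mp hz
    have hb : b.dy < 0 := by nlinarith [hz1.1]
    have hz2 := List.isChain_cons.mp hz1.2
    have hzr : IsZigzag r := hz2.2
    have hur : StartsUp r := by
      intro s hs
      have := hz2.1 s hs
      nlinarith
    have hlr : r.length % 2 = 0 := by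
      simp only [List.length_cons] at hl
      omega
    obtain ⟨ih1, ih2, ih3, ih4, ih5, ih6⟩ := ih hzr hur hlr
    refine ⟨?_, ?_, ?_, ?_, ?_, ?_⟩
    · intro c hc
      simp [enc] at hc
      rcases hc with hc | hc
      · subst hc; exact dxn_mem a
      · exact ih1 c hc
    · intro c hc
      simp [enc] at hc
      rcases hc with hc | hc
      · subst hc; exact dxn_mem b
      · exact ih2 c hc
    · simp [enc, ih3]
    · simp only [enc, List.sum_cons, pathSize_cons_s7]
      push_cast
      push_cast at ih4
      rw [dxn_cast, dxn_cast]
      linarith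
    · simp only [enc, List.sum_cons, pathAlt_cons]
      push_cast
      rw [dy_up ha, dy_dn hb]
      push_cast
      push_cast at ih5
      linarith
    · simp only [enc, decU, ih6, stepUp_dxn ha, stepDn_dxn hb]

theorem enc_down : ∀ p : List KStep, IsZigzag p → StartsDown p → p.length % 2 = 0 →
    (∀ c ∈ (enc p).1, c = 1 ∨ c = 2) ∧ (∀ c ∈ (enc p).2, c = 1 ∨ c = 2) ∧
    (enc p).1.length = (enc p).2.length ∧
    ((enc p).1.sum : ℤ) + (enc p).2.sum = pathSize p ∧
    ((enc p).1.sum : ℤ) - (enc p).2.sum = pathAlt p ∧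
    decD (enc p).2 (enc p).1 = p := by
  intro p
  induction p using enc.induct with
  | case1 =>
    intro _ _ _
    simp [enc, decD, pathSize, pathAlt]
  | case2 a =>
    intro _ _ h
    simp at h
  | case3 a b r ih =>
    intro hz hu hl
    have ha : a.dy < 0 := hu a rfl
    have hz1 := List.isChain_cons_cons.mp hz
    have hb : 0 < b.dy := by nlinarith [hz1.1]
    have hz2 := List.isChain_cons.mp hz1.2
    have hzr : IsZigzag r := hz2.2
    have hur : StartsDown r := by
      intro s hs
      have := hz2.1 s hs
      nlinarith
    have hlr : r.length % 2 = 0 := by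
      simp only [List.length_cons] at hl
      omega
    obtain ⟨ih1, ih2, ih3, ih4, ih5, ih6⟩ := ih hzr hur hlr
    refine ⟨?_, ?_, ?_, ?_, ?_, ?_⟩
    · intro c hc
      simp [enc] at hc
      rcases hc with hc | hc
      · subst hc; exact dxn_mem a
      · exact ih1 c hc
    · intro c hc
      simp [enc] at hc
      rcases hc with hc | hc
      · subst hc; exact dxn_mem b
      · exact ih2 c hc
    · simp [enc, ih3]
    · simp only [enc, List.sum_cons, pathSize_cons_s7]
      push_cast
      push_cast at ih4
      rw [dxn_cast, dxn_cast]
      linarith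
    · simp only [enc, List.sum_cons, pathAlt_cons]
      push_cast
      rw [dy_dn ha, dy_up hb]
      push_cast
      push_cast at ih5
      linarith
    · simp only [enc, decD, ih6, stepUp_dxn hb, stepDn_dxn ha]

theorem decU_spec : ∀ (xs ys : List ℕ), xs.length = ys.length →
    (∀ c ∈ xs, c = 1 ∨ c = 2) → (∀ c ∈ ys, c = 1 ∨ c = 2) →
    pathSize (decU xs ys) = (xs.sum : ℤ) + ys.sum ∧
    pathAlt (decU xs ys) = (ys.sum : ℤ) - xs.sum ∧
    IsZigzag (decU xs ys) ∧ StartsUp (decU xs ys) ∧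
    enc (decU xs ys) = (xs, ys) := by
  intro xs
  induction xs with
  | nil =>
    intro ys h _ _
    have : ys = [] := by simpa using (List.length_eq_zero_iff.mp h.symm)
    subst this
    simp [decU, pathSize, pathAlt, IsZigzag, StartsUp, enc, List.Chain', List.isChain_nil]
  | cons x xs ih =>
    intro ys h hx hy
    cases ys with
    | nil => simp at h
    | cons y ys =>
      have hx1 : x = 1 ∨ x = 2 := hx x (by simp)
      have hy1 : y = 1 ∨ y = 2 := hy y (by simp)
      obtain ⟨ih1, ih2, ih3, ih4, ih5⟩ := ih ys (by simpa using h)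
        (fun c hc => hx c (by simp [hc])) (fun c hc => hy c (by simp [hc]))
      obtain ⟨hux, huy, huz, hud⟩ := stepUp_facts hx1
      obtain ⟨hdx, hdy, hdz, hdd⟩ := stepDn_facts hy1
      refine ⟨?_, ?_, ?_, ?_, ?_⟩
      · simp only [decU, pathSize_cons_s7, ih1, List.sum_cons, hux, hdx]
        push_cast
        ring
      · simp only [decU, pathAlt_cons, ih2, List.sum_cons, huy, hdy]
        push_cast
        ring
      · rw [decU, IsZigzag, List.Chain', List.isChain_cons_cons, List.isChain_cons]
        refine ⟨by rw [huy, hdy]; nlinarith, fun s hs => ?_, ih3⟩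
        · have := ih4 s hs
          rw [hdy]
          nlinarith
      · intro s hs
        simp only [decU, List.head?_cons, Option.mem_def, Option.some.injEq] at hs
        rw [← hs]
        exact huz
      · simp only [decU, enc, ih5, hud, hdd]

theorem decD_spec : ∀ (xs ys : List ℕ), xs.length = ys.length →
    (∀ c ∈ xs, c = 1 ∨ c = 2) → (∀ c ∈ ys, c = 1 ∨ c = 2) →
    pathSize (decD xs ys) = (xs.sum : ℤ) + ys.sum ∧
    pathAlt (decD xs ys) = (ys.sum : ℤ) - xs.sum ∧
    IsZigzag (decD xs ys) ∧ StartsDown (decD xs ys) ∧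
    enc (decD xs ys) = (ys, xs) := by
  intro xs
  induction xs with
  | nil =>
    intro ys h _ _
    have : ys = [] := by simpa using (List.length_eq_zero_iff.mp h.symm)
    subst this
    simp [decD, pathSize, pathAlt, IsZigzag, StartsDown, enc, List.Chain', List.isChain_nil]
  | cons x xs ih =>
    intro ys h hx hy
    cases ys with
    | nil => simp at h
    | cons y ys =>
      have hx1 : x = 1 ∨ x = 2 := hx x (by simp)
      have hy1 : y = 1 ∨ y = 2 := hy y (by simp)
      obtain ⟨ih1, ih2, ih3, ih4, ih5⟩ := ih ys (by simpa using h)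
        (fun c hc => hx c (by simp [hc])) (fun c hc => hy c (by simp [hc]))
      obtain ⟨hux, huy, huz, hud⟩ := stepUp_facts hx1
      obtain ⟨hdx, hdy, hdz, hdd⟩ := stepDn_facts hy1
      refine ⟨?_, ?_, ?_, ?_, ?_⟩
      · simp only [decD, pathSize_cons_s7, ih1, List.sum_cons, hux, hdx]
        push_cast
        ring
      · simp only [decD, pathAlt_cons, ih2, List.sum_cons, huy, hdy]
        push_cast
        ring
      · rw [decD, IsZigzag, List.Chain', List.isChain_cons_cons, List.isChain_cons]
        refine ⟨by rw [huy, hdy]; nlinarith, fun s hs => ?_, ih3⟩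
        · have := ih4 s hs
          rw [huy]
          nlinarith
      · intro s hs
        simp only [decD, List.head?_cons, Option.mem_def, Option.some.injEq] at hs
        rw [← hs]
        exact hdz
      · simp only [decD, enc, ih5, hud, hdd]

theorem even_len {n k : ℕ} (hpar : n % 2 = k % 2) {p : List KStep}
    (hs : pathSize p = (n : ℤ)) (ha : pathAlt p = (k : ℤ)) : p.length % 2 = 0 := by
  have := parity_len p
  rw [hs, ha] at this
  omega

theorem fwdU {n k : ℕ} (hpar : n % 2 = k % 2) (hk : k ≤ n) {p : List KStep}
    (hs : pathSize p = (n : ℤ)) (ha : pathAlt p = (k : ℤ)) (hz : IsZigzag p)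
    (hu : StartsUp p) :
    ((∀ a ∈ (enc p).1, a = 1 ∨ a = 2) ∧ (enc p).1.sum = (n - k) / 2) ∧
    ((∀ a ∈ (enc p).2, a = 1 ∨ a = 2) ∧ (enc p).2.sum = (n + k) / 2) ∧
    (enc p).1.length = (enc p).2.length := by
  obtain ⟨h1, h2, h3, h4, h5, _⟩ := enc_up p hz hu (even_len hpar hs ha)
  rw [hs] at h4
  rw [ha] at h5
  exact ⟨⟨h1, by omega⟩, ⟨h2, by omega⟩, h3⟩

theorem fwdD {n k : ℕ} (hpar : n % 2 = k % 2) (hk : k ≤ n) {p : List KStep}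
    (hs : pathSize p = (n : ℤ)) (ha : pathAlt p = (k : ℤ)) (hz : IsZigzag p)
    (hu : StartsDown p) :
    ((∀ a ∈ (enc p).2, a = 1 ∨ a = 2) ∧ (enc p).2.sum = (n - k) / 2) ∧
    ((∀ a ∈ (enc p).1, a = 1 ∨ a = 2) ∧ (enc p).1.sum = (n + k) / 2) ∧
    (enc p).2.length = (enc p).1.length := by
  obtain ⟨h1, h2, h3, h4, h5, _⟩ := enc_down p hz hu (even_len hpar hs ha)
  rw [hs] at h4
  rw [ha] at h5
  exact ⟨⟨h2, by omega⟩, ⟨h1, by omega⟩, h3.symm⟩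

theorem bwdU {n k : ℕ} (hpar : n % 2 = k % 2) (hk : k ≤ n) {xs ys : List ℕ}
    (h1 : ∀ a ∈ xs, a = 1 ∨ a = 2) (h1s : xs.sum = (n - k) / 2)
    (h2 : ∀ a ∈ ys, a = 1 ∨ a = 2) (h2s : ys.sum = (n + k) / 2)
    (h3 : xs.length = ys.length) :
    pathSize (decU xs ys) = (n : ℤ) ∧ pathAlt (decU xs ys) = (k : ℤ) ∧
    IsZigzag (decU xs ys) ∧ StartsUp (decU xs ys) := by
  obtain ⟨hs, ha, hz, hu, _⟩ := decU_spec xs ys h3 h1 h2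
  refine ⟨?_, ?_, hz, hu⟩
  · rw [hs, h1s, h2s]; omega
  · rw [ha, h1s, h2s]; omega

theorem bwdD {n k : ℕ} (hpar : n % 2 = k % 2) (hk : k ≤ n) {xs ys : List ℕ}
    (h1 : ∀ a ∈ xs, a = 1 ∨ a = 2) (h1s : xs.sum = (n - k) / 2)
    (h2 : ∀ a ∈ ys, a = 1 ∨ a = 2) (h2s : ys.sum = (n + k) / 2)
    (h3 : xs.length = ys.length) :
    pathSize (decD xs ys) = (n : ℤ) ∧ pathAlt (decD xs ys) = (k : ℤ) ∧
    IsZigzag (decD xs ys) ∧ StartsDown (decD xs ys) := by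
  obtain ⟨hs, ha, hz, hu, _⟩ := decD_spec xs ys h3 h1 h2
  refine ⟨?_, ?_, hz, hu⟩
  · rw [hs, h1s, h2s]; omega
  · rw [ha, h1s, h2s]; omega


theorem stmt7 (n k : ℕ) (hpar : n % 2 = k % 2) (hk : k ≤ n) :
    Nat.card {p : List KStep //
        pathSize p = (n : ℤ) ∧ pathAlt p = (k : ℤ) ∧ IsZigzag p ∧ StartsUp p} =
      compPairCount ((n - k) / 2) ((n + k) / 2) ∧
    Nat.card {p : List KStep //
        pathSize p = (n : ℤ) ∧ pathAlt p = (k : ℤ) ∧ IsZigzag p ∧ StartsDown p} =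
      compPairCount ((n - k) / 2) ((n + k) / 2) := by
  constructor
  · apply Nat.card_congr
    refine ⟨fun p => ⟨enc p.1, fwdU hpar hk p.2.1 p.2.2.1 p.2.2.2.1 p.2.2.2.2⟩,
      fun xy => ⟨decU xy.1.1 xy.1.2,
        bwdU hpar hk xy.2.1.1 xy.2.1.2 xy.2.2.1.1 xy.2.2.1.2 xy.2.2.2⟩, ?_, ?_⟩
    · intro p
      exact Subtype.ext
        ((enc_up p.1 p.2.2.2.1 p.2.2.2.2 (even_len hpar p.2.1 p.2.2.1)).2.2.2.2.2)
    · intro xy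
      apply Subtype.ext
      have := (decU_spec xy.1.1 xy.1.2 xy.2.2.2 xy.2.1.1 xy.2.2.1.1).2.2.2.2
      simp only [this]
  · apply Nat.card_congr
    refine ⟨fun p => ⟨((enc p.1).2, (enc p.1).1),
        fwdD hpar hk p.2.1 p.2.2.1 p.2.2.2.1 p.2.2.2.2⟩,
      fun xy => ⟨decD xy.1.1 xy.1.2,
        bwdD hpar hk xy.2.1.1 xy.2.1.2 xy.2.2.1.1 xy.2.2.1.2 xy.2.2.2⟩, ?_, ?_⟩
    · intro p
      exact Subtype.ext
        ((enc_down p.1 p.2.2.2.1 p.2.2.2.2 (even_len hpar p.2.1 p.2.2.1)).2.2.2.2.2)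
    · intro xy
      apply Subtype.ext
      have := (decD_spec xy.1.1 xy.1.2 xy.2.2.2 xy.2.1.1 xy.2.2.1.1).2.2.2.2
      simp only [this]
end
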